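/- (Proposition 1, edges sharing one node, same SNP) Let v1, v2, v3 be pairwise distinct nodes and p a SNP, and assume σ_f² + 2σ_g² + 2σ_h² > 0. Then Cor(L(v1,v3,p), L(v2,v3,p)) = (σ_f² + σ_g² + σ_h²)/(σ_f² + 2σ_g² + 2σ_h²). -/

import Mathlib

/-!
Write `Φ` for the independent family `(F, G, H)`. For `v ≠ v'`, `L v v' p` is the sum of `Φ` over
five distinct indices, and for pairwise independent square-integrable summands the covariance of
two such sums is the total variance of the summands they share. The edges `(v₁, v₃)` and
`(v₂, v₃)` share `F_{q p}`, `G_{v₃}` and `H_{v₃, p}`, and each has variance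
`σf² + 2σg² + 2σh²`; since that common variance is nonnegative, the two square roots in the
correlation multiply back to it.
-/

open MeasureTheory ProbabilityTheory

/-- Covariance of two real random variables: `Cov(X,Y) = E[(X - E X)(Y - E Y)]`. -/
noncomputable def cov {Ω : Type*} [MeasurableSpace Ω] (μ : Measure Ω) (X Y : Ω → ℝ) : ℝ :=
  ∫ ω, (X ω - ∫ x, X x ∂μ) * (Y ω - ∫ x, Y x ∂μ) ∂μ

/-- Pearson correlation: `Cor(X,Y) = Cov(X,Y) / (Var(X)^{1/2} Var(Y)^{1/2})`. -/
noncomputable def cor {Ω : Type*} [MeasurableSpace Ω] (μ : Measure Ω) (X Y : Ω → ℝ) : ℝ :=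
  cov μ X Y / (Real.sqrt (variance X μ) * Real.sqrt (variance Y μ))

theorem cov_eq_covariance {Ω : Type*} [MeasurableSpace Ω] (μ : Measure Ω) (X Y : Ω → ℝ) :
    cov μ X Y = cov[X, Y; μ] := rfl

theorem cor_eq_cov_div_variance {Ω : Type*} [MeasurableSpace Ω] {μ : Measure Ω}
    {X Y : Ω → ℝ} (h : Var[X; μ] = Var[Y; μ]) : cor μ X Y = cov μ X Y / Var[X; μ] := by
  rw [cor, ← h, Real.mul_self_sqrt (variance_nonneg X μ)]

theorem covariance_sum_sum_of_pairwise_indepFun {Ω ι : Type*} [MeasurableSpace Ω]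
    {μ : Measure Ω} [IsFiniteMeasure μ] [DecidableEq ι] {X : ι → Ω → ℝ}
    (hX : ∀ i, MemLp (X i) 2 μ) (hindep : Pairwise fun i j ↦ IndepFun (X i) (X j) μ)
    (s t : Finset ι) :
    cov[∑ i ∈ s, X i, ∑ j ∈ t, X j; μ] = ∑ i ∈ s ∩ t, Var[X i; μ] := by
  have hrow : ∀ i, ∑ j ∈ t, cov[X i, X j; μ] = if i ∈ t then Var[X i; μ] else 0 := fun i ↦ by
    rw [← Finset.sum_ite_eq t i fun _ ↦ Var[X i; μ]]
    refine Finset.sum_congr rfl fun j _ ↦ ?_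
    split_ifs with hij
    · rw [← hij, covariance_self (hX i).aemeasurable]
    · exact (hindep hij).covariance_eq_zero (hX i) (hX j)
  rw [covariance_sum_sum' (fun i _ ↦ hX i) (fun j _ ↦ hX j), Finset.sum_congr rfl fun i _ ↦ hrow i,
    Finset.sum_ite_mem]

section Edge

variable {Q V P : Type*} [DecidableEq Q] [DecidableEq V] [DecidableEq P]

def edgeSupport (q : P → Q) (v v' : V) (p : P) : Finset (Q ⊕ (V ⊕ V × P)) :=
  {.inl (q p), .inr (.inl v), .inr (.inl v'), .inr (.inr (v, p)), .inr (.inr (v', p))}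

theorem sum_edgeSupport {M : Type*} [AddCommMonoid M] (q : P → Q) {v v' : V} (p : P)
    (hv : v ≠ v') (f : Q ⊕ (V ⊕ V × P) → M) :
    ∑ i ∈ edgeSupport q v v' p, f i = f (.inl (q p)) + f (.inr (.inl v)) + f (.inr (.inl v'))
      + f (.inr (.inr (v, p))) + f (.inr (.inr (v', p))) := by
  simp [edgeSupport, Finset.sum_insert, hv, add_assoc]

theorem edgeSupport_inter_edgeSupport (q : P → Q) {v₁ v₂ v₃ : V} (p : P) (h₁₂ : v₁ ≠ v₂) :
    edgeSupport q v₁ v₃ p ∩ edgeSupport q v₂ v₃ p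
      = {.inl (q p), .inr (.inl v₃), .inr (.inr (v₃, p))} := by
  ext i
  simp only [edgeSupport, Finset.mem_inter, Finset.mem_insert, Finset.mem_singleton]
  grind

end Edge

theorem nrss_cor_shared_node_same_snp_general
    {Ω Q V P : Type*} [MeasurableSpace Ω]
    (μ : Measure Ω) [IsProbabilityMeasure μ]
    (q : P → Q)
    (F : Q → Ω → ℝ) (G : V → Ω → ℝ) (H : V × P → Ω → ℝ)
    (σf2 σg2 σh2 : ℝ)
    (hIndep : iIndepFun (β := fun _ : Q ⊕ (V ⊕ V × P) => ℝ)
      (Sum.elim F (Sum.elim G H)) μ)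
    (hFmem : ∀ i, MemLp (F i) 2 μ)
    (hGmem : ∀ i, MemLp (G i) 2 μ)
    (hHmem : ∀ i, MemLp (H i) 2 μ)
    (hFvar : ∀ i, variance (F i) μ = σf2)
    (hGvar : ∀ i, variance (G i) μ = σg2)
    (hHvar : ∀ i, variance (H i) μ = σh2)
    (L : V → V → P → Ω → ℝ)
    (hL : ∀ v v' p ω, L v v' p ω = F (q p) ω + G v ω + G v' ω + H (v, p) ω + H (v', p) ω)
    (v1 v2 v3 : V) (h12 : v1 ≠ v2) (h13 : v1 ≠ v3) (h23 : v2 ≠ v3)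
    (p : P) :
    cor μ (L v1 v3 p) (L v2 v3 p) = (σf2 + σg2 + σh2) / (σf2 + 2 * σg2 + 2 * σh2) := by
  classical
  set Φ : Q ⊕ (V ⊕ V × P) → Ω → ℝ := Sum.elim F (Sum.elim G H)
  have hΦ : ∀ i, MemLp (Φ i) 2 μ := by
    rintro (i | i | i)
    exacts [hFmem i, hGmem i, hHmem i]
  have hindep : Pairwise fun i j ↦ IndepFun (Φ i) (Φ j) μ := fun _ _ hij ↦ hIndep.indepFun hij
  have hLsum : ∀ v v', v ≠ v' → L v v' p = ∑ i ∈ edgeSupport q v v' p, Φ i := fun v v' hv ↦ by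
    ext ω
    simp [Finset.sum_apply, sum_edgeSupport q p hv, hL, Φ]
  have hvar : ∀ v v', v ≠ v' → Var[L v v' p; μ] = σf2 + 2 * σg2 + 2 * σh2 := fun v v' hv ↦ by
    rw [hLsum v v' hv, IndepFun.variance_sum (fun i _ ↦ hΦ i) (hindep.set_pairwise _),
      sum_edgeSupport q p hv]
    simp only [Φ, Sum.elim_inl, Sum.elim_inr, hFvar, hGvar, hHvar]
    ring
  have hcov : cov μ (L v1 v3 p) (L v2 v3 p) = σf2 + σg2 + σh2 := by
    rw [cov_eq_covariance, hLsum v1 v3 h13, hLsum v2 v3 h23,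
      covariance_sum_sum_of_pairwise_indepFun hΦ hindep, edgeSupport_inter_edgeSupport q p h12]
    simp [Φ, hFvar, hGvar, hHvar, add_assoc]
  rw [cor_eq_cov_div_variance (by rw [hvar v1 v3 h13, hvar v2 v3 h23]), hcov, hvar v1 v3 h13]

/-- Proposition 1, edges sharing one node, same SNP. -/
theorem nrss_cor_shared_node_same_snp
    {Ω Q V P : Type*} [MeasurableSpace Ω]
    (μ : Measure Ω) [IsProbabilityMeasure μ]
    (q : P → Q)
    (F : Q → Ω → ℝ) (G : V → Ω → ℝ) (H : V × P → Ω → ℝ)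
    (σf2 σg2 σh2 : ℝ)
    (hIndep : iIndepFun (β := fun _ : Q ⊕ (V ⊕ V × P) => ℝ)
      (Sum.elim F (Sum.elim G H)) μ)
    (hFmem : ∀ i, MemLp (F i) 2 μ)
    (hGmem : ∀ i, MemLp (G i) 2 μ)
    (hHmem : ∀ i, MemLp (H i) 2 μ)
    (hFvar : ∀ i, variance (F i) μ = σf2)
    (hGvar : ∀ i, variance (G i) μ = σg2)
    (hHvar : ∀ i, variance (H i) μ = σh2)
    (L : V → V → P → Ω → ℝ)
    (hL : ∀ v v' p ω, L v v' p ω = F (q p) ω + G v ω + G v' ω + H (v, p) ω + H (v', p) ω)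
    (v1 v2 v3 : V) (h12 : v1 ≠ v2) (h13 : v1 ≠ v3) (h23 : v2 ≠ v3)
    (p : P)
    (hpos : 0 < σf2 + 2 * σg2 + 2 * σh2) :
    cor μ (L v1 v3 p) (L v2 v3 p) = (σf2 + σg2 + σh2) / (σf2 + 2 * σg2 + 2 * σh2) :=
  nrss_cor_shared_node_same_snp_general μ q F G H σf2 σg2 σh2 hIndep hFmem hGmem hHmem hFvar hGvar
    hHvar L hL v1 v2 v3 h12 h13 h23 p
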